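/- arXiv:1812.01728 — 2 statements merged into one kernel-verified Lean document; each statement's English description precedes it below -/
import Mathlib

section
/- Let f, g : ℂ → ℂ be nonconstant entire functions with min{|f(z)|, |g(z)|} ≤ 1 for all z ∈ ℂ. Then there exist nonconstant entire functions f₃, g₃ : ℂ → ℂ such that |f₃(0)| > 1, |g₃(0)| > 1, and min{|f₃(z)|, |g₃(z)|} ≤ 1/|z| < 1 for all z with |z| > 1; moreover, if f is of minimal exponential type then f₃ can be taken of minimal exponential type, and if g is of finite exponential type then g₃ can be taken of finite exponential type. -/
/-- An entire function has finite exponential type if `|f z| ≤ C · exp (τ · |z|)`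
for some constants `C, τ > 0`. -/
def FinExpType (f : ℂ → ℂ) : Prop :=
  ∃ C τ : ℝ, 0 < C ∧ 0 < τ ∧ ∀ z : ℂ, ‖f z‖ ≤ C * Real.exp (τ * ‖z‖)

/-- An entire function has minimal exponential type if for every `ε > 0` there is
a constant `C` with `|f z| ≤ C · exp (ε · |z|)`. -/
def MinExpType (f : ℂ → ℂ) : Prop :=
  ∀ ε : ℝ, 0 < ε → ∃ C : ℝ, ∀ z : ℂ, ‖f z‖ ≤ C * Real.exp (ε * ‖z‖)

/-- A function is constant. -/
def IsConst (f : ℂ → ℂ) : Prop := ∃ c : ℂ, ∀ z : ℂ, f z = c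

/-!
Pick `a` with `f' a ≠ 0` and `g' a ≠ 0` (the zeros of the nonzero entire functions `f'`, `g'` are
isolated) and replace `f` by `z ↦ (f (L z + a) - f a) / ((1 + ‖f a‖) z)`, and `g` likewise. Where
`‖f (L z + a)‖ ≤ 1` the new function has modulus at most `1 / ‖z‖`, and its value
`L f' a / (1 + ‖f a‖)` at `0` has modulus `> 1` once `L` is large. If the new `f` were a constant
of modulus `> 1`, the new `g` would have modulus `< 1` off the unit disc but `> 1` at `0`, which
is impossible for a bounded, hence constant, entire function. The affine substitution and the
division by `z` preserve exponential bounds, multiplying the type by `L`.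
-/

open Filter Metric Set

theorem exists_ne_zero_and_ne_zero_of_analyticOnNhd {𝕜 E F : Type*} [NontriviallyNormedField 𝕜]
    [NormedAddCommGroup E] [NormedSpace 𝕜 E] [PreconnectedSpace E]
    [NormedAddCommGroup F] [NormedSpace 𝕜 F] {φ ψ : E → F}
    (hφ : AnalyticOnNhd 𝕜 φ univ) (hψ : AnalyticOnNhd 𝕜 ψ univ)
    (hφ0 : ∃ x, φ x ≠ 0) (hψ0 : ∃ x, ψ x ≠ 0) : ∃ x, φ x ≠ 0 ∧ ψ x ≠ 0 := by
  by_contra! h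
  obtain ⟨p, hp⟩ := hφ0
  have hψp : ψ =ᶠ[nhds p] 0 :=
    ((hφ p (mem_univ p)).continuousAt.eventually_ne hp).mono fun x hx => h x hx
  obtain ⟨y, hy⟩ := hψ0
  exact hy (hψ.eqOn_zero_of_preconnected_of_eventuallyEq_zero isPreconnected_univ
    (mem_univ p) hψp (mem_univ y))

theorem exists_deriv_ne_zero_of_not_isConst {f : ℂ → ℂ} (hf : Differentiable ℂ f)
    (hfc : ¬ IsConst f) : ∃ x, deriv f x ≠ 0 := by
  by_contra! h
  exact hfc ⟨f 0, fun z => is_const_of_deriv_eq_zero hf h z 0⟩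

theorem exists_deriv_ne_zero_and_deriv_ne_zero {f g : ℂ → ℂ} (hf : Differentiable ℂ f)
    (hg : Differentiable ℂ g) (hfc : ¬ IsConst f) (hgc : ¬ IsConst g) :
    ∃ a, deriv f a ≠ 0 ∧ deriv g a ≠ 0 :=
  exists_ne_zero_and_ne_zero_of_analyticOnNhd (fun x _ => (hf.analyticAt x).deriv)
    (fun x _ => (hg.analyticAt x).deriv) (exists_deriv_ne_zero_of_not_isConst hf hfc)
    (exists_deriv_ne_zero_of_not_isConst hg hgc)

theorem not_isConst_of_min_norm_lt_one {f g : ℂ → ℂ} (hg : Differentiable ℂ g)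
    (hf0 : 1 < ‖f 0‖) (hg0 : 1 < ‖g 0‖) (hmin : ∀ z : ℂ, 1 < ‖z‖ → min ‖f z‖ ‖g z‖ < 1) :
    ¬ IsConst f := by
  rintro ⟨k, hk⟩
  have hg_lt : ∀ z : ℂ, 1 < ‖z‖ → ‖g z‖ < 1 := fun z hz => by
    have h := hmin z hz
    rw [hk z, ← hk 0] at h
    exact (min_lt_iff.1 h).resolve_left (lt_asymm hf0)
  have hbdd : Bornology.IsBounded (range g) := by
    refine (((isCompact_closedBall (0 : ℂ) 1).image hg.continuous).isBounded.union
      (isBounded_ball (x := (0 : ℂ)) (r := 1))).subset ?_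
    rintro _ ⟨z, rfl⟩
    rcases le_or_gt ‖z‖ 1 with hz | hz
    · exact Or.inl ⟨z, mem_closedBall_zero_iff.2 hz, rfl⟩
    · exact Or.inr (mem_ball_zero_iff.2 (hg_lt z hz))
  have h2 := hg_lt 2 (by norm_num)
  rw [hg.apply_eq_apply_of_bounded hbdd 2 0] at h2
  exact h2.not_gt hg0

theorem Differentiable.dslope {E : Type*} [NormedAddCommGroup E] [NormedSpace ℂ E]
    [CompleteSpace E] {φ : ℂ → E} (hφ : Differentiable ℂ φ) (c : ℂ) :
    Differentiable ℂ (_root_.dslope φ c) :=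
  differentiableOn_univ.1 ((Complex.differentiableOn_dslope univ_mem).2 hφ.differentiableOn)

def ExpBounded (τ : ℝ) (f : ℂ → ℂ) : Prop :=
  ∃ C : ℝ, ∀ z : ℂ, ‖f z‖ ≤ C * Real.exp (τ * ‖z‖)

namespace ExpBounded

variable {τ : ℝ} {f : ℂ → ℂ}

theorem exists_nonneg (h : ExpBounded τ f) :
    ∃ C : ℝ, 0 ≤ C ∧ ∀ z : ℂ, ‖f z‖ ≤ C * Real.exp (τ * ‖z‖) := by
  obtain ⟨C, hC⟩ := h
  refine ⟨C, (norm_nonneg (f 0)).trans ?_, hC⟩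
  simpa using hC 0

theorem mono {τ' : ℝ} (h : ExpBounded τ f) (hτ : τ ≤ τ') : ExpBounded τ' f := by
  obtain ⟨C, hC0, hC⟩ := h.exists_nonneg
  exact ⟨C, fun z => (hC z).trans (by gcongr)⟩

theorem comp_affine (h : ExpBounded τ f) (hτ : 0 ≤ τ) (L a : ℂ) :
    ExpBounded (τ * ‖L‖) (fun z => f (L * z + a)) := by
  obtain ⟨C, hC0, hC⟩ := h.exists_nonneg
  refine ⟨C * Real.exp (τ * ‖a‖), fun z => ?_⟩
  calc ‖f (L * z + a)‖ ≤ C * Real.exp (τ * ‖L * z + a‖) := hC _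
    _ ≤ C * Real.exp (τ * (‖L‖ * ‖z‖ + ‖a‖)) := by
        gcongr
        exact (norm_add_le _ _).trans_eq (by rw [norm_mul])
    _ = C * Real.exp (τ * ‖a‖) * Real.exp (τ * ‖L‖ * ‖z‖) := by
        rw [mul_assoc, ← Real.exp_add]; ring_nf

theorem dslope (h : ExpBounded τ f) (hτ : 0 ≤ τ) (hcont : Continuous (_root_.dslope f 0)) :
    ExpBounded τ (_root_.dslope f 0) := by
  obtain ⟨C, hC0, hC⟩ := h.exists_nonneg
  obtain ⟨M, hM⟩ := (isCompact_closedBall (0 : ℂ) 1).exists_bound_of_continuousOn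
    hcont.continuousOn
  refine ⟨max M (C + ‖f 0‖), fun z => ?_⟩
  have hexp : 1 ≤ Real.exp (τ * ‖z‖) := Real.one_le_exp (by positivity)
  have hmax : 0 ≤ max M (C + ‖f 0‖) := le_max_of_le_right (by positivity)
  rcases le_or_gt ‖z‖ 1 with hz | hz
  · calc ‖_root_.dslope f 0 z‖ ≤ M := hM z (mem_closedBall_zero_iff.2 hz)
      _ ≤ max M (C + ‖f 0‖) := le_max_left _ _
      _ ≤ max M (C + ‖f 0‖) * Real.exp (τ * ‖z‖) := le_mul_of_one_le_right hmax hexp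
  · have hz0 : z ≠ 0 := norm_pos_iff.1 (one_pos.trans hz)
    calc ‖_root_.dslope f 0 z‖ = ‖f z - f 0‖ / ‖z‖ := by
          rw [dslope_of_ne _ hz0, slope_def_field, sub_zero, norm_div]
      _ ≤ ‖f z - f 0‖ := div_le_self (norm_nonneg _) hz.le
      _ ≤ C * Real.exp (τ * ‖z‖) + ‖f 0‖ * Real.exp (τ * ‖z‖) :=
          (norm_sub_le _ _).trans (add_le_add (hC z) (le_mul_of_one_le_right (norm_nonneg _) hexp))
      _ ≤ max M (C + ‖f 0‖) * Real.exp (τ * ‖z‖) := by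
          rw [← add_mul]; gcongr; exact le_max_right _ _

theorem div_const (h : ExpBounded τ f) (c : ℂ) : ExpBounded τ (fun z => f z / c) := by
  obtain ⟨C, hC⟩ := h
  refine ⟨C / ‖c‖, fun z => ?_⟩
  rw [norm_div, div_mul_eq_mul_div]
  exact div_le_div_of_nonneg_right (hC z) (norm_nonneg c)

theorem finExpType (h : ExpBounded τ f) (hτ : 0 < τ) :
    FinExpType f := by
  obtain ⟨C, hC0, hC⟩ := h.exists_nonneg
  exact ⟨C + 1, τ, by positivity, hτ, fun z => (hC z).trans (by gcongr; linarith)⟩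

end ExpBounded

noncomputable def rescaledSlope (f : ℂ → ℂ) (a L : ℂ) (z : ℂ) : ℂ :=
  dslope (fun w => f (L * w + a)) 0 z / ((1 + ‖f a‖ : ℝ) : ℂ)

section rescaledSlope

variable {f : ℂ → ℂ} {a L z : ℂ}

theorem differentiable_rescaledSlope (hf : Differentiable ℂ f) (a L : ℂ) :
    Differentiable ℂ (rescaledSlope f a L) :=
  ((hf.comp (by fun_prop)).dslope 0).div_const _

theorem rescaledSlope_zero (hf : Differentiable ℂ f) :
    rescaledSlope f a L 0 = L * deriv f a / ((1 + ‖f a‖ : ℝ) : ℂ) := by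
  have h : HasDerivAt (fun w => f (L * w + a)) (deriv f a * L) 0 := by
    refine HasDerivAt.comp (0 : ℂ) (by simpa using (hf a).hasDerivAt) ?_
    simpa using ((hasDerivAt_id (0 : ℂ)).const_mul L).add_const a
  rw [rescaledSlope, dslope_same, h.deriv, mul_comm]

theorem eventually_one_lt_norm_rescaledSlope_zero (hf : Differentiable ℂ f)
    (ha : deriv f a ≠ 0) : ∀ᶠ L : ℝ in atTop, 1 < ‖rescaledSlope f a L 0‖ := by
  have hd : 0 < ‖deriv f a‖ := norm_pos_iff.2 ha
  filter_upwards [eventually_gt_atTop ((1 + ‖f a‖) / ‖deriv f a‖)] with L hL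
  have hL0 : 0 ≤ L := le_trans (by positivity) hL.le
  rw [rescaledSlope_zero hf, norm_div, norm_mul, Complex.norm_of_nonneg hL0,
    Complex.norm_of_nonneg (by positivity), one_lt_div (by positivity)]
  exact (div_lt_iff₀ hd).1 hL

theorem norm_rescaledSlope_le (hz : z ≠ 0) (h : ‖f (L * z + a)‖ ≤ 1) :
    ‖rescaledSlope f a L z‖ ≤ 1 / ‖z‖ := by
  have hpos : 0 < 1 + ‖f a‖ := by positivity
  rw [rescaledSlope, dslope_of_ne _ hz, slope_def_field, sub_zero, mul_zero, zero_add, norm_div,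
    norm_div, Complex.norm_of_nonneg hpos.le, div_right_comm]
  gcongr
  rw [div_le_one hpos]
  exact (norm_sub_le _ _).trans (by linarith)

theorem ExpBounded.rescaledSlope {τ : ℝ} (h : ExpBounded τ f) (hτ : 0 ≤ τ)
    (hf : Differentiable ℂ f) (a L : ℂ) : ExpBounded (τ * ‖L‖) (rescaledSlope f a L) :=
  ((h.comp_affine hτ L a).dslope (by positivity)
    ((hf.comp (by fun_prop)).dslope 0).continuous).div_const _

end rescaledSlope

theorem normalization (f g : ℂ → ℂ)
    (hf : Differentiable ℂ f) (hg : Differentiable ℂ g)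
    (hfc : ¬ IsConst f) (hgc : ¬ IsConst g)
    (hmin : ∀ z : ℂ, min (‖f z‖) (‖g z‖) ≤ 1) :
    ∃ f₃ g₃ : ℂ → ℂ,
      Differentiable ℂ f₃ ∧ Differentiable ℂ g₃ ∧
      ¬ IsConst f₃ ∧ ¬ IsConst g₃ ∧
      1 < ‖f₃ 0‖ ∧ 1 < ‖g₃ 0‖ ∧
      (∀ z : ℂ, 1 < ‖z‖ →
        min (‖f₃ z‖) (‖g₃ z‖) ≤ 1 / ‖z‖ ∧
        1 / ‖z‖ < 1) ∧
      (MinExpType f → MinExpType f₃) ∧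
      (FinExpType g → FinExpType g₃) := by
  obtain ⟨a, hfa, hga⟩ := exists_deriv_ne_zero_and_deriv_ne_zero hf hg hfc hgc
  obtain ⟨L, ⟨hf0, hg0⟩, hL⟩ := ((eventually_one_lt_norm_rescaledSlope_zero hf hfa).and
    (eventually_one_lt_norm_rescaledSlope_zero hg hga) |>.and (eventually_gt_atTop 0)).exists
  have hnormL : ‖(L : ℂ)‖ = L := Complex.norm_of_nonneg hL.le
  have hbound : ∀ z : ℂ, 1 < ‖z‖ → min ‖rescaledSlope f a L z‖ ‖rescaledSlope g a L z‖ ≤ 1 / ‖z‖ ∧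
      1 / ‖z‖ < 1 := by
    intro z hz
    have hz0 : z ≠ 0 := norm_pos_iff.1 (one_pos.trans hz)
    refine ⟨?_, (div_lt_one (one_pos.trans hz)).2 hz⟩
    rcases min_le_iff.1 (hmin (L * z + a)) with h | h
    · exact min_le_of_left_le (norm_rescaledSlope_le hz0 h)
    · exact min_le_of_right_le (norm_rescaledSlope_le hz0 h)
  have hlt : ∀ z : ℂ, 1 < ‖z‖ → min ‖rescaledSlope f a L z‖ ‖rescaledSlope g a L z‖ < 1 :=
    fun z hz => (hbound z hz).1.trans_lt (hbound z hz).2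
  have hg₃ := differentiable_rescaledSlope hg a L
  refine ⟨rescaledSlope f a L, rescaledSlope g a L, differentiable_rescaledSlope hf a L, hg₃,
    not_isConst_of_min_norm_lt_one hg₃ hf0 hg0 hlt,
    not_isConst_of_min_norm_lt_one (differentiable_rescaledSlope hf a L) hg0 hf0
      (fun z hz => min_comm ‖rescaledSlope f a L z‖ _ ▸ hlt z hz),
    hf0, hg0, hbound, fun hf_min ε hε => ?_, ?_⟩
  · refine (ExpBounded.rescaledSlope (hf_min (ε / L) (by positivity)) (by positivity)
      hf a L).mono ?_
    rw [hnormL, div_mul_cancel₀ _ hL.ne']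
  · rintro ⟨C, τ, -, hτ, hC⟩
    exact (ExpBounded.rescaledSlope ⟨C, hC⟩ hτ.le hg a L).finExpType
      (by rw [hnormL]; positivity)
end

section
/- Let s : (0,∞) → ℝ be a nondecreasing continuous function and let f : ℂ → ℂ be an entire function that is bounded on the rotating half-plane Ω_s. Then sup_{z ∈ ℂ} min{|f(z)|, |f(−z)|} < ∞. -/
/-!
Every `z ≠ 0` is `±r·e^{iφ}` with `r = |z|` and `s(r) ≤ φ ≤ s(r) + π`, a point of the closure
of `Ω_s`; since `ℂ \ {0}` is dense, every `z` lies in the closure of `Ω_s` or of `-Ω_s`. On `Ω_s` the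
continuous, even function `z ↦ min ‖f z‖ ‖f (-z)‖` is bounded by the bound of `‖f‖`, hence it
is bounded on that closure and, by evenness, everywhere.
-/

/-- The rotating half-plane `Ω_s = {r·e^{iα} : r > 0, s r < α < s r + π}`. -/
def rotHalfPlane (s : ℝ → ℝ) : Set ℂ :=
  {z : ℂ | ∃ r α : ℝ, 0 < r ∧ s r < α ∧ α < s r + Real.pi ∧
    z = (r : ℂ) * Complex.exp (α * Complex.I)}

open Set Real

lemma polar_mem_closure_rotHalfPlane (s : ℝ → ℝ) {r φ : ℝ} (hr : 0 < r)
    (hφ : φ ∈ Icc (s r) (s r + π)) :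
    (r : ℂ) * Complex.exp (φ * Complex.I) ∈ closure (rotHalfPlane s) := by
  rw [← closure_Ioo (by linarith [pi_pos] : s r ≠ s r + π)] at hφ
  exact map_mem_closure (f := fun α : ℝ ↦ (r : ℂ) * Complex.exp (α * Complex.I)) (by fun_prop) hφ
    fun α hα ↦ ⟨r, α, hr, hα.1, hα.2, rfl⟩

lemma mem_closure_rotHalfPlane_or_neg_of_ne_zero (s : ℝ → ℝ) {z : ℂ} (hz : z ≠ 0) :
    z ∈ closure (rotHalfPlane s) ∨ -z ∈ closure (rotHalfPlane s) := by
  set r := ‖z‖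
  set k := toIcoDiv pi_pos (s r) z.arg
  set φ := toIcoMod pi_pos (s r) z.arg
  have hr : 0 < r := norm_pos_iff.mpr hz
  have hφ : φ ∈ Icc (s r) (s r + π) := Ico_subset_Icc_self (toIcoMod_mem_Ico _ _ _)
  have hzφ : z = (-1) ^ k * ((r : ℂ) * Complex.exp (φ * Complex.I)) := by
    conv_lhs => rw [← Complex.norm_mul_exp_arg_mul_I z,
      ← toIcoMod_add_toIcoDiv_zsmul pi_pos (s r) z.arg]
    rw [← Complex.exp_pi_mul_I, ← Complex.exp_int_mul, mul_left_comm, ← Complex.exp_add]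
    push_cast [zsmul_eq_mul]
    congr 2
    ring
  rcases Int.even_or_odd k with hk | hk
  · left
    rw [hzφ, hk.neg_one_zpow, one_mul]
    exact polar_mem_closure_rotHalfPlane s hr hφ
  · right
    rw [hzφ, hk.neg_one_zpow, neg_one_mul, neg_neg]
    exact polar_mem_closure_rotHalfPlane s hr hφ

lemma mem_closure_rotHalfPlane_or_neg (s : ℝ → ℝ) (z : ℂ) :
    z ∈ closure (rotHalfPlane s) ∨ -z ∈ closure (rotHalfPlane s) := by
  have hclosed : IsClosed {z : ℂ | z ∈ closure (rotHalfPlane s) ∨ -z ∈ closure (rotHalfPlane s)} :=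
    isClosed_closure.union (isClosed_closure.preimage continuous_neg)
  have hsub : ({0}ᶜ : Set ℂ) ⊆ {z | z ∈ closure (rotHalfPlane s) ∨ -z ∈ closure (rotHalfPlane s)} :=
    fun _ hz ↦ mem_closure_rotHalfPlane_or_neg_of_ne_zero s hz
  exact hclosed.closure_subset_iff.mpr hsub
    ((dense_compl_singleton (0 : ℂ)).closure_eq ▸ mem_univ z)

theorem min_of_antipodes_bounded_general (s : ℝ → ℝ)
    (f : ℂ → ℂ) (hf : Differentiable ℂ f)
    (hbdd : ∃ M : ℝ, ∀ z ∈ rotHalfPlane s, ‖f z‖ ≤ M) :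
    ∃ M : ℝ, ∀ z : ℂ, min ‖f z‖ ‖f (-z)‖ ≤ M := by
  obtain ⟨M, hM⟩ := hbdd
  refine ⟨M, fun z ↦ ?_⟩
  have hclosure : closure (rotHalfPlane s) ⊆ {z | min ‖f z‖ ‖f (-z)‖ ≤ M} := by
    have hcont : Continuous f := hf.continuous
    refine (isClosed_le (by fun_prop) continuous_const).closure_subset_iff.mpr ?_
    exact fun w hw ↦ (min_le_left _ _).trans (hM w hw)
  rcases mem_closure_rotHalfPlane_or_neg s z with hz | hz
  · exact hclosure hz
  · simpa only [mem_ofPred_eq, neg_neg, min_comm] using hclosure hz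

theorem min_of_antipodes_bounded (s : ℝ → ℝ)
    (hmono : MonotoneOn s (Set.Ioi 0))
    (hcont : ContinuousOn s (Set.Ioi 0))
    (f : ℂ → ℂ) (hf : Differentiable ℂ f)
    (hbdd : ∃ M : ℝ, ∀ z ∈ rotHalfPlane s, ‖f z‖ ≤ M) :
    ∃ M : ℝ, ∀ z : ℂ, min ‖f z‖ ‖f (-z)‖ ≤ M :=
  min_of_antipodes_bounded_general s f hf hbdd
end
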